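/- Let d ≥ 2, let D = D(M) be a conic domain, and let ψ : D → ℝ be infinitely differentiable with c₁ ρ(x) ≤ ψ(x) ≤ c₂ ρ(x) on D for some constants c₂ ≥ c₁ > 0 and with C_k := sup_{x ∈ D} ρ(x)^k ‖D^{k+1} ψ(x)‖ < ∞ for every k ∈ ℕ. Let p ∈ (1, ∞), θ, Θ, μ ∈ ℝ and m ∈ ℕ. Then there exists a constant N ≥ 1, depending only on d, p, m, θ, Θ, μ, c₁, c₂ and C₀, …, C_{m−1}, such that for every function f that is m times continuously differentiable on D, N^{−1} ‖f‖_{K^m_{p, θ+μp, Θ+μp}(D)} ≤ ‖ψ^μ f‖_{K^m_{p, θ, Θ}(D)} ≤ N ‖f‖_{K^m_{p, θ+μp, Θ+μp}(D)}. -/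

import Mathlib

open MeasureTheory ENNReal

/-- The conic domain `D(M) = {x ∈ ℝ^d \ {0} : x/|x| ∈ M}` determined by a subset `M` of
the unit sphere `S^(d−1)`. -/
def conicDomain (d : ℕ) (M : Set (EuclideanSpace ℝ (Fin d))) :
    Set (EuclideanSpace ℝ (Fin d)) :=
  {x | x ≠ 0 ∧ ‖x‖⁻¹ • x ∈ M}

/-- `ρ(x) = dist(x, ∂D)`, the distance to the boundary of `D`. -/
noncomputable def bdist (d : ℕ) (D : Set (EuclideanSpace ℝ (Fin d)))
    (x : EuclideanSpace ℝ (Fin d)) : ℝ :=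
  Metric.infDist x (frontier D)

/-- The weighted Sobolev norm
`‖f‖_{K^m_{p,θ,Θ}(D)} = Σ_{k=0}^m (∫_D (ρ^k ‖D^k f‖)^p ρ∘^(θ−Θ) ρ^(Θ−d) dx)^(1/p)`,
valued in `[0,∞]`, where `ρ∘(x) = |x|` and `ρ(x) = dist(x, ∂D)`. -/
noncomputable def Knorm (d : ℕ) (D : Set (EuclideanSpace ℝ (Fin d))) (p θ Θ : ℝ) (m : ℕ)
    (f : EuclideanSpace ℝ (Fin d) → ℝ) : ℝ≥0∞ :=
  ∑ k ∈ Finset.range (m + 1),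
    (∫⁻ x in D,
        ENNReal.ofReal
          ((bdist d D x ^ k * ‖iteratedFDerivWithin ℝ k f D x‖) ^ p *
            (‖x‖ ^ (θ - Θ) * bdist d D x ^ (Θ - (d : ℝ))))) ^ (1 / p)


/-!
Write `ρ` for the distance to `∂D`. Since `D(ψ ^ μ) = μ ψ ^ (μ - 1) Dψ`, induction on the order
with the Leibniz rule turns `c₁ ρ ≤ ψ ≤ c₂ ρ` and `ρ ^ k ‖D^(k+1) ψ‖ ≤ C k` into
`‖D^i (ψ ^ μ)‖ ≲ ρ ^ (μ - i)`. A second use of the Leibniz rule gives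
`ρ ^ k ‖D^k (ψ ^ μ f)‖ ≲ ρ ^ μ ∑_{i ≤ m} ρ ^ i ‖D^i f‖`, and the factor `ρ ^ (μ p)` is absorbed by
the weight, shifting `(θ, Θ)` to `(θ + μ p, Θ + μ p)`. The lower bound is the upper bound for `-μ`
applied to `ψ ^ μ f`.
-/

open Set Finset Metric Filter Topology
open scoped ContDiff

section WeightedLeibniz

variable {E F : Type*} [NormedAddCommGroup E] [NormedSpace ℝ E] [NormedAddCommGroup F]
  [NormedSpace ℝ F] {s : Set E} {x : E}

lemma pow_mul_rpow_sub {r : ℝ} (hr : 0 < r) (α : ℝ) {i k : ℕ} (hik : i ≤ k) :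
    r ^ k * r ^ (α - i) = r ^ α * r ^ (k - i) := by
  rw [← Real.rpow_natCast, ← Real.rpow_natCast, ← Real.rpow_add hr, ← Real.rpow_add hr,
    Nat.cast_sub hik]
  ring_nf

lemma pow_mul_norm_iteratedFDerivWithin_smul_le {g : E → ℝ} {h : E → F} {k : ℕ}
    (hg : ContDiffOn ℝ k g s) (hh : ContDiffOn ℝ k h s) (hs : UniqueDiffOn ℝ s) (hx : x ∈ s)
    {r K α : ℝ} (hr : 0 < r)
    (hgx : ∀ i ≤ k, ‖iteratedFDerivWithin ℝ i g s x‖ ≤ K * r ^ (α - i)) :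
    r ^ k * ‖iteratedFDerivWithin ℝ k (fun y => g y • h y) s x‖ ≤
      K * r ^ α * ∑ i ∈ range (k + 1),
        k.choose i * (r ^ (k - i) * ‖iteratedFDerivWithin ℝ (k - i) h s x‖) := by
  calc r ^ k * ‖iteratedFDerivWithin ℝ k (fun y => g y • h y) s x‖
      ≤ r ^ k * ∑ i ∈ range (k + 1), k.choose i * ‖iteratedFDerivWithin ℝ i g s x‖ *
          ‖iteratedFDerivWithin ℝ (k - i) h s x‖ := by
        gcongr
        exact norm_iteratedFDerivWithin_smul_le hg hh hs hx le_rfl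
    _ ≤ r ^ k * ∑ i ∈ range (k + 1), k.choose i * (K * r ^ (α - i)) *
          ‖iteratedFDerivWithin ℝ (k - i) h s x‖ := by
        gcongr with i hi
        exact hgx i (Nat.lt_succ_iff.mp (mem_range.mp hi))
    _ = K * r ^ α * ∑ i ∈ range (k + 1),
          k.choose i * (r ^ (k - i) * ‖iteratedFDerivWithin ℝ (k - i) h s x‖) := by
        simp only [mul_sum]
        refine sum_congr rfl fun i hi => ?_
        have key := pow_mul_rpow_sub hr α (Nat.lt_succ_iff.mp (mem_range.mp hi))
        linear_combination (k.choose i * K * ‖iteratedFDerivWithin ℝ (k - i) h s x‖) * key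

end WeightedLeibniz

section RpowDerivatives

variable {E : Type*} [NormedAddCommGroup E] [NormedSpace ℝ E] {s : Set E} {x : E}
  {ρ ψ : E → ℝ} {c₁ c₂ : ℝ} {C : ℕ → ℝ}

lemma rpow_le_max_mul_rpow {r t : ℝ} (μ : ℝ) (hc₁ : 0 < c₁) (hr : 0 < r) (h₁ : c₁ * r ≤ t)
    (h₂ : t ≤ c₂ * r) : t ^ μ ≤ max (c₁ ^ μ) (c₂ ^ μ) * r ^ μ := by
  have hc₂ : 0 < c₂ := pos_of_mul_pos_left ((mul_pos hc₁ hr).trans_le (h₁.trans h₂)) hr.le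
  rcases le_or_gt 0 μ with hμ | hμ
  · calc t ^ μ ≤ (c₂ * r) ^ μ := Real.rpow_le_rpow ((mul_pos hc₁ hr).le.trans h₁) h₂ hμ
      _ = c₂ ^ μ * r ^ μ := Real.mul_rpow hc₂.le hr.le
      _ ≤ _ := by gcongr; exact le_max_right _ _
  · calc t ^ μ ≤ (c₁ * r) ^ μ := Real.rpow_le_rpow_of_nonpos (mul_pos hc₁ hr) h₁ hμ.le
      _ = c₁ ^ μ * r ^ μ := Real.mul_rpow hc₁.le hr.le
      _ ≤ _ := by gcongr; exact le_max_left _ _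

/-- The recursion step is the Leibniz rule applied to `D(ψ ^ μ) = μ ψ ^ (μ - 1) Dψ`. -/
noncomputable def rpowDerivBound (c₁ c₂ : ℝ) (C : ℕ → ℝ) : ℕ → ℝ → ℝ
  | 0, μ => max (c₁ ^ μ) (c₂ ^ μ)
  | j + 1, μ => max (rpowDerivBound c₁ c₂ C j μ)
      (|μ| * rpowDerivBound c₁ c₂ C j (μ - 1) *
        ∑ q ∈ range (j + 1), j.choose q * max (C (j - q)) 0)

lemma fderivWithin_rpow_const_eqOn (hs : UniqueDiffOn ℝ s) (hψ : DifferentiableOn ℝ ψ s)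
    (hψ0 : ∀ x ∈ s, ψ x ≠ 0) (μ : ℝ) :
    EqOn (fderivWithin ℝ (fun y => ψ y ^ μ) s)
      (fun y => (μ * ψ y ^ (μ - 1)) • fderivWithin ℝ ψ s y) s := fun y hy =>
  ((hψ y hy).hasFDerivWithinAt.rpow_const (Or.inl (hψ0 y hy))).fderivWithin (hs y hy)

lemma norm_iteratedFDerivWithin_succ_rpow_le (hs : UniqueDiffOn ℝ s)
    (hψ : ContDiffOn ℝ ∞ ψ s) (hψ0 : ∀ x ∈ s, 0 < ψ x) (hx : x ∈ s) {r K μ : ℝ} (hr : 0 < r)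
    {j : ℕ} (hprev : ∀ q ≤ j, ‖iteratedFDerivWithin ℝ q (fun y => ψ y ^ (μ - 1)) s x‖ ≤
      K * r ^ (μ - 1 - q))
    (hC : ∀ k ≤ j, r ^ k * ‖iteratedFDerivWithin ℝ (k + 1) ψ s x‖ ≤ C k) :
    ‖iteratedFDerivWithin ℝ (j + 1) (fun y => ψ y ^ μ) s x‖ ≤
      |μ| * K * (∑ q ∈ range (j + 1), j.choose q * max (C (j - q)) 0) * r ^ (μ - (j + 1 : ℕ)) := by
  have hrpow : ∀ ν : ℝ, ContDiffOn ℝ ∞ (fun y => ψ y ^ ν) s := fun ν =>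
    hψ.rpow_const_of_ne fun y hy => (hψ0 y hy).ne'
  have hg : ContDiffOn ℝ j (fun y => μ * ψ y ^ (μ - 1)) s :=
    contDiffOn_const.mul ((hrpow (μ - 1)).of_le (by exact_mod_cast le_top))
  have hh : ContDiffOn ℝ j (fderivWithin ℝ ψ s) s :=
    hψ.fderivWithin hs (m := j) (by exact_mod_cast le_top)
  have hgx : ∀ q ≤ j, ‖iteratedFDerivWithin ℝ q (fun y => μ * ψ y ^ (μ - 1)) s x‖ ≤
      |μ| * K * r ^ (μ - 1 - q) := fun q hq => by
    rw [show (fun y => μ * ψ y ^ (μ - 1)) = μ • fun y => ψ y ^ (μ - 1) from rfl,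
      iteratedFDerivWithin_const_smul_apply
        (((hrpow (μ - 1)).of_le (by exact_mod_cast le_top)) x hx) hs hx,
      norm_smul, Real.norm_eq_abs, mul_assoc]
    gcongr
    exact hprev q hq
  have hleib := pow_mul_norm_iteratedFDerivWithin_smul_le hg hh hs hx hr hgx
  have hsum : ∑ q ∈ range (j + 1), j.choose q *
        (r ^ (j - q) * ‖iteratedFDerivWithin ℝ (j - q) (fderivWithin ℝ ψ s) s x‖) ≤
      ∑ q ∈ range (j + 1), j.choose q * max (C (j - q)) 0 := by
    gcongr with q hq
    rw [norm_iteratedFDerivWithin_fderivWithin hs hx]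
    exact (hC _ (Nat.sub_le j q)).trans (le_max_left _ _)
  have hK : 0 ≤ K := by
    have h0 := (norm_nonneg _).trans (hprev 0 (Nat.zero_le j))
    exact (mul_nonneg_iff_of_pos_right (Real.rpow_pos_of_pos hr _)).mp h0
  have hrj : r ^ j * r ^ (μ - (j + 1 : ℕ)) = r ^ (μ - 1) := by
    rw [← Real.rpow_natCast, ← Real.rpow_add hr]
    push_cast
    ring_nf
  refine le_of_mul_le_mul_left ?_ (pow_pos hr j)
  calc r ^ j * ‖iteratedFDerivWithin ℝ (j + 1) (fun y => ψ y ^ μ) s x‖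
      = r ^ j * ‖iteratedFDerivWithin ℝ j
          (fun y => (μ * ψ y ^ (μ - 1)) • fderivWithin ℝ ψ s y) s x‖ := by
        rw [← norm_iteratedFDerivWithin_fderivWithin hs hx, iteratedFDerivWithin_congr
          (fderivWithin_rpow_const_eqOn hs (hψ.differentiableOn (by simp))
            (fun y hy => (hψ0 y hy).ne') μ) hx]
    _ ≤ |μ| * K * r ^ (μ - 1) * ∑ q ∈ range (j + 1), j.choose q * max (C (j - q)) 0 := by
        refine hleib.trans ?_
        gcongr
    _ = r ^ j * (|μ| * K * (∑ q ∈ range (j + 1), j.choose q * max (C (j - q)) 0) *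
          r ^ (μ - (j + 1 : ℕ))) := by
        rw [← hrj]; ring

lemma rpowDerivBound_nonneg (hc₁ : 0 < c₁) (C : ℕ → ℝ) :
    ∀ j μ, 0 ≤ rpowDerivBound c₁ c₂ C j μ
  | 0, μ => le_max_of_le_left (Real.rpow_nonneg hc₁.le μ)
  | j + 1, μ => le_max_of_le_left (rpowDerivBound_nonneg hc₁ C j μ)

theorem norm_iteratedFDerivWithin_rpow_le (hs : UniqueDiffOn ℝ s) (hψ : ContDiffOn ℝ ∞ ψ s)
    (hc₁ : 0 < c₁) (hρ : ∀ x ∈ s, 0 < ρ x)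
    (hψρ : ∀ x ∈ s, c₁ * ρ x ≤ ψ x ∧ ψ x ≤ c₂ * ρ x) {j : ℕ}
    (hC : ∀ k < j, ∀ x ∈ s, ρ x ^ k * ‖iteratedFDerivWithin ℝ (k + 1) ψ s x‖ ≤ C k)
    (μ : ℝ) {i : ℕ} (hi : i ≤ j) (hx : x ∈ s) :
    ‖iteratedFDerivWithin ℝ i (fun y => ψ y ^ μ) s x‖ ≤
      rpowDerivBound c₁ c₂ C j μ * ρ x ^ (μ - i) := by
  have hψ0 : ∀ x ∈ s, 0 < ψ x := fun x hx =>
    (mul_pos hc₁ (hρ x hx)).trans_le (hψρ x hx).1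
  induction j generalizing μ i with
  | zero =>
    obtain rfl := Nat.le_zero.mp hi
    rw [norm_iteratedFDerivWithin_zero, Real.norm_of_nonneg (Real.rpow_nonneg (hψ0 x hx).le μ),
      Nat.cast_zero, sub_zero]
    exact rpow_le_max_mul_rpow μ hc₁ (hρ x hx) (hψρ x hx).1 (hψρ x hx).2
  | succ j ih =>
    have ih' := ih fun k hk => hC k (Nat.lt_succ_of_lt hk)
    rcases Nat.of_le_succ hi with hi | rfl
    · exact (ih' μ hi).trans
        (mul_le_mul_of_nonneg_right (le_max_left _ _) (Real.rpow_nonneg (hρ x hx).le _))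
    · refine (norm_iteratedFDerivWithin_succ_rpow_le hs hψ hψ0 hx (hρ x hx)
        (fun q hq => ih' (μ - 1) hq) fun k hk => hC k (Nat.lt_succ_of_le hk) x hx).trans
        (mul_le_mul_of_nonneg_right (le_max_right _ _) (Real.rpow_nonneg (hρ x hx).le _))

lemma sum_choose_mul_le_two_pow_mul_sum {a : ℕ → ℝ} (ha : ∀ i, 0 ≤ a i) {k m : ℕ}
    (hk : k ≤ m) :
    ∑ i ∈ range (k + 1), k.choose i * a (k - i) ≤ 2 ^ m * ∑ i ∈ range (m + 1), a i :=
  calc ∑ i ∈ range (k + 1), k.choose i * a (k - i)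
      ≤ ∑ i ∈ range (k + 1), 2 ^ m * a (k - i) := by
        gcongr with i
        · exact ha _
        · exact_mod_cast (Nat.choose_le_two_pow k i).trans (Nat.pow_le_pow_right two_pos hk)
    _ = 2 ^ m * ∑ i ∈ range (k + 1), a i := by
        rw [← mul_sum, ← sum_range_reflect a (k + 1)]
        simp only [Nat.add_sub_cancel]
    _ ≤ 2 ^ m * ∑ i ∈ range (m + 1), a i := by
        gcongr
        exact fun i _ _ => ha i

theorem pow_mul_norm_iteratedFDerivWithin_rpow_mul_le (hs : UniqueDiffOn ℝ s)
    (hψ : ContDiffOn ℝ ∞ ψ s) (hc₁ : 0 < c₁) (hρ : ∀ x ∈ s, 0 < ρ x)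
    (hψρ : ∀ x ∈ s, c₁ * ρ x ≤ ψ x ∧ ψ x ≤ c₂ * ρ x) {m : ℕ}
    (hC : ∀ k < m, ∀ x ∈ s, ρ x ^ k * ‖iteratedFDerivWithin ℝ (k + 1) ψ s x‖ ≤ C k)
    (μ : ℝ) {f : E → ℝ} (hf : ContDiffOn ℝ m f s) {k : ℕ} (hk : k ≤ m) (hx : x ∈ s) :
    ρ x ^ k * ‖iteratedFDerivWithin ℝ k (fun y => ψ y ^ μ * f y) s x‖ ≤
      2 ^ m * rpowDerivBound c₁ c₂ C m μ * ρ x ^ μ *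
        ∑ i ∈ range (m + 1), ρ x ^ i * ‖iteratedFDerivWithin ℝ i f s x‖ := by
  have hB := rpowDerivBound_nonneg (c₂ := c₂) hc₁ C m μ
  have hg : ContDiffOn ℝ k (fun y => ψ y ^ μ) s :=
    (hψ.rpow_const_of_ne fun y hy => ((mul_pos hc₁ (hρ y hy)).trans_le (hψρ y hy).1).ne').of_le
      (by exact_mod_cast le_top)
  calc ρ x ^ k * ‖iteratedFDerivWithin ℝ k (fun y => ψ y ^ μ * f y) s x‖
      ≤ rpowDerivBound c₁ c₂ C m μ * ρ x ^ μ * ∑ i ∈ range (k + 1),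
          k.choose i * (ρ x ^ (k - i) * ‖iteratedFDerivWithin ℝ (k - i) f s x‖) :=
        pow_mul_norm_iteratedFDerivWithin_smul_le hg (hf.of_le (by exact_mod_cast hk)) hs hx
          (hρ x hx) fun i hi => norm_iteratedFDerivWithin_rpow_le hs hψ hc₁ hρ hψρ hC μ
            (hi.trans hk) hx
    _ ≤ rpowDerivBound c₁ c₂ C m μ * ρ x ^ μ *
          (2 ^ m * ∑ i ∈ range (m + 1), ρ x ^ i * ‖iteratedFDerivWithin ℝ i f s x‖) := by
        have hρx := (hρ x hx).le
        gcongr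
        exact sum_choose_mul_le_two_pow_mul_sum
          (a := fun i => ρ x ^ i * ‖iteratedFDerivWithin ℝ i f s x‖) (fun i => by positivity) hk
    _ = _ := by ring

end RpowDerivatives

theorem ENNReal.rpow_sum_le_sum_rpow {ι : Type*} (s : Finset ι) (f : ι → ℝ≥0∞) {q : ℝ}
    (hq0 : 0 < q) (hq1 : q ≤ 1) : (∑ i ∈ s, f i) ^ q ≤ ∑ i ∈ s, f i ^ q := by
  classical
  induction s using Finset.induction_on with
  | empty => simp [ENNReal.zero_rpow_of_pos hq0]
  | insert a s ha ih =>
    rw [sum_insert ha, sum_insert ha]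
    exact (ENNReal.rpow_add_le_add_rpow _ _ hq0.le hq1).trans (by gcongr)

lemma sum_lintegral_rpow_le_of_le_mul_sum {α ι κ : Type*} [MeasurableSpace α] {ν : Measure α}
    {t : Finset κ} {s : Finset ι} {u : κ → α → ℝ≥0∞} {v : ι → α → ℝ≥0∞} {c : ℝ≥0∞} {q : ℝ}
    (hq0 : 0 < q) (hq1 : q ≤ 1) (hv : ∀ i ∈ s, AEMeasurable (v i) ν)
    (huv : ∀ k ∈ t, ∀ᵐ x ∂ν, u k x ≤ c * ∑ i ∈ s, v i x) :
    ∑ k ∈ t, (∫⁻ x, u k x ∂ν) ^ q ≤ #t * c ^ q * ∑ i ∈ s, (∫⁻ x, v i x ∂ν) ^ q := by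
  have hu : ∀ k ∈ t, (∫⁻ x, u k x ∂ν) ^ q ≤ c ^ q * ∑ i ∈ s, (∫⁻ x, v i x ∂ν) ^ q :=
    fun k hk => calc
      (∫⁻ x, u k x ∂ν) ^ q ≤ (∫⁻ x, c * ∑ i ∈ s, v i x ∂ν) ^ q :=
        ENNReal.rpow_le_rpow (lintegral_mono_ae (huv k hk)) hq0.le
      _ = c ^ q * (∑ i ∈ s, ∫⁻ x, v i x ∂ν) ^ q := by
        rw [lintegral_const_mul'' _ (Finset.aemeasurable_fun_sum _ hv), lintegral_finsetSum' _ hv,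
          ENNReal.mul_rpow_of_nonneg _ _ hq0.le]
      _ ≤ c ^ q * ∑ i ∈ s, (∫⁻ x, v i x ∂ν) ^ q := by
        gcongr
        exact ENNReal.rpow_sum_le_sum_rpow _ _ hq0 hq1
  calc ∑ k ∈ t, (∫⁻ x, u k x ∂ν) ^ q ≤ ∑ _k ∈ t, c ^ q * ∑ i ∈ s, (∫⁻ x, v i x ∂ν) ^ q :=
        sum_le_sum hu
    _ = _ := by rw [sum_const, nsmul_eq_mul, mul_assoc]

lemma rpow_mul_le_of_le_mul_sum {p A r μ b w : ℝ} {a : ℕ → ℝ} {n : ℕ} (hp : 1 ≤ p)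
    (hA : 0 ≤ A) (hr : 0 < r) (hb : 0 ≤ b) (ha : ∀ i, 0 ≤ a i) (hw : 0 ≤ w)
    (h : b ≤ A * r ^ μ * ∑ i ∈ range n, a i) :
    b ^ p * w ≤ A ^ p * n ^ (p - 1) * ∑ i ∈ range n, a i ^ p * (r ^ (μ * p) * w) := by
  have hp0 : 0 ≤ p := zero_le_one.trans hp
  have hsum : 0 ≤ ∑ i ∈ range n, a i := sum_nonneg fun i _ => ha i
  calc b ^ p * w ≤ (A * r ^ μ * ∑ i ∈ range n, a i) ^ p * w := by gcongr
    _ = A ^ p * (∑ i ∈ range n, a i) ^ p * (r ^ (μ * p) * w) := by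
        rw [Real.mul_rpow (by positivity) hsum, Real.mul_rpow hA (by positivity),
          ← Real.rpow_mul hr.le]
        ring
    _ ≤ A ^ p * (n ^ (p - 1) * ∑ i ∈ range n, a i ^ p) * (r ^ (μ * p) * w) := by
        gcongr
        simpa using Real.rpow_sum_le_const_mul_sum_rpow_of_nonneg (s := range n) hp
          fun i _ => ha i
    _ = _ := by rw [← sum_mul]; ring

section Knorm

variable {d : ℕ} {D : Set (EuclideanSpace ℝ (Fin d))} {p θ Θ : ℝ} {m : ℕ}
  {f ψ : EuclideanSpace ℝ (Fin d) → ℝ}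

noncomputable def KnormIntegrand (d : ℕ) (D : Set (EuclideanSpace ℝ (Fin d))) (p θ Θ : ℝ)
    (k : ℕ) (f : EuclideanSpace ℝ (Fin d) → ℝ) (x : EuclideanSpace ℝ (Fin d)) : ℝ≥0∞ :=
  ENNReal.ofReal ((bdist d D x ^ k * ‖iteratedFDerivWithin ℝ k f D x‖) ^ p *
    (‖x‖ ^ (θ - Θ) * bdist d D x ^ (Θ - (d : ℝ))))

lemma Knorm_eq_sum_lintegral :
    Knorm d D p θ Θ m f =
      ∑ k ∈ range (m + 1), (∫⁻ x in D, KnormIntegrand d D p θ Θ k f x) ^ (1 / p) :=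
  rfl

lemma Knorm_congr (hD : MeasurableSet D) {g : EuclideanSpace ℝ (Fin d) → ℝ} (h : EqOn f g D) :
    Knorm d D p θ Θ m f = Knorm d D p θ Θ m g := by
  refine sum_congr rfl fun k _ => ?_
  congr 1
  refine setLIntegral_congr_fun hD fun x hx => ?_
  simp only [iteratedFDerivWithin_congr h hx]

lemma aemeasurable_KnormIntegrand (hD : IsOpen D) (hf : ContDiffOn ℝ m f D) {k : ℕ} (hk : k ≤ m) :
    AEMeasurable (KnormIntegrand d D p θ Θ k f) (volume.restrict D) := by
  have hderiv : ContinuousOn (fun x => ‖iteratedFDerivWithin ℝ k f D x‖) D :=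
    (hf.continuousOn_iteratedFDerivWithin (by exact_mod_cast hk) hD.uniqueDiffOn).norm
  have hρ : Measurable (bdist d D) := (continuous_infDist_pt _).measurable
  refine ENNReal.measurable_ofReal.comp_aemeasurable
    ((((hρ.pow_const k).aemeasurable.mul (hderiv.aemeasurable hD.measurableSet)).pow_const p).mul
      ?_)
  exact ((continuous_norm.measurable.pow_const _).mul (hρ.pow_const _)).aemeasurable

variable {c₁ c₂ : ℝ} {C : ℕ → ℝ}

lemma KnormIntegrand_rpow_mul_le (hp : 1 ≤ p) (hD : IsOpen D) (hρ : ∀ x ∈ D, 0 < bdist d D x)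
    (hψ : ContDiffOn ℝ ∞ ψ D) (hc₁ : 0 < c₁)
    (hψρ : ∀ x ∈ D, c₁ * bdist d D x ≤ ψ x ∧ ψ x ≤ c₂ * bdist d D x)
    (hC : ∀ k < m, ∀ x ∈ D, bdist d D x ^ k * ‖iteratedFDerivWithin ℝ (k + 1) ψ D x‖ ≤ C k)
    (μ : ℝ) (hf : ContDiffOn ℝ m f D) {k : ℕ} (hk : k ≤ m) {x : EuclideanSpace ℝ (Fin d)}
    (hx : x ∈ D) :
    KnormIntegrand d D p θ Θ k (fun y => ψ y ^ μ * f y) x ≤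
      ENNReal.ofReal ((2 ^ m * rpowDerivBound c₁ c₂ C m μ) ^ p * (m + 1) ^ (p - 1)) *
        ∑ i ∈ range (m + 1), KnormIntegrand d D p (θ + μ * p) (Θ + μ * p) i f x := by
  have hr := hρ x hx
  have hB := rpowDerivBound_nonneg (c₂ := c₂) hc₁ C m μ
  have hweight : ‖x‖ ^ (θ + μ * p - (Θ + μ * p)) * bdist d D x ^ (Θ + μ * p - d) =
      bdist d D x ^ (μ * p) * (‖x‖ ^ (θ - Θ) * bdist d D x ^ (Θ - d)) := by
    rw [show Θ + μ * p - d = μ * p + (Θ - d) by ring, Real.rpow_add hr]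
    ring_nf
  have hbound := rpow_mul_le_of_le_mul_sum (n := m + 1) (w := ‖x‖ ^ (θ - Θ) * bdist d D x ^ (Θ - d))
    hp (by positivity) hr (by positivity)
    (fun i => by positivity) (by positivity)
    (pow_mul_norm_iteratedFDerivWithin_rpow_mul_le hD.uniqueDiffOn hψ hc₁ hρ hψρ hC μ hf hk hx)
  unfold KnormIntegrand
  rw [← ENNReal.ofReal_sum_of_nonneg fun i _ => by positivity,
    ← ENNReal.ofReal_mul (by positivity)]
  refine ENNReal.ofReal_le_ofReal (hbound.trans_eq ?_)
  simp only [hweight]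
  push_cast
  ring

noncomputable def rpowMulKnormConst (p : ℝ) (m : ℕ) (c₁ c₂ : ℝ) (C : ℕ → ℝ) (μ : ℝ) : ℝ :=
  (m + 1) * ((2 ^ m * rpowDerivBound c₁ c₂ C m μ) ^ p * (m + 1) ^ (p - 1)) ^ (1 / p)

theorem Knorm_rpow_mul_le (hp : 1 < p) (hD : IsOpen D) (hρ : ∀ x ∈ D, 0 < bdist d D x)
    (hψ : ContDiffOn ℝ ∞ ψ D) (hc₁ : 0 < c₁)
    (hψρ : ∀ x ∈ D, c₁ * bdist d D x ≤ ψ x ∧ ψ x ≤ c₂ * bdist d D x)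
    (hC : ∀ k < m, ∀ x ∈ D, bdist d D x ^ k * ‖iteratedFDerivWithin ℝ (k + 1) ψ D x‖ ≤ C k)
    (μ : ℝ) (hf : ContDiffOn ℝ m f D) :
    Knorm d D p θ Θ m (fun x => ψ x ^ μ * f x) ≤
      ENNReal.ofReal (rpowMulKnormConst p m c₁ c₂ C μ) *
        Knorm d D p (θ + μ * p) (Θ + μ * p) m f := by
  have hp0 : 0 < 1 / p := by positivity
  have hp1 : 1 / p ≤ 1 := (div_le_one (by positivity)).mpr hp.le
  rw [Knorm_eq_sum_lintegral, Knorm_eq_sum_lintegral]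
  refine (sum_lintegral_rpow_le_of_le_mul_sum hp0 hp1
    (fun i hi => aemeasurable_KnormIntegrand hD hf (Nat.lt_succ_iff.mp (mem_range.mp hi)))
    fun k hk => (ae_restrict_iff' hD.measurableSet).2 (Filter.Eventually.of_forall fun x hx =>
      KnormIntegrand_rpow_mul_le hp.le hD hρ hψ hc₁ hψρ hC μ hf
        (Nat.lt_succ_iff.mp (mem_range.mp hk)) hx)).trans_eq ?_
  have hB := rpowDerivBound_nonneg (c₂ := c₂) hc₁ C m μ
  rw [card_range, rpowMulKnormConst, ENNReal.ofReal_mul (p := (m : ℝ) + 1) (by positivity),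
    ← ENNReal.ofReal_rpow_of_nonneg (by positivity) hp0.le]
  norm_cast

theorem Knorm_le_Knorm_rpow_mul (hp : 1 < p) (hD : IsOpen D) (hρ : ∀ x ∈ D, 0 < bdist d D x)
    (hψ : ContDiffOn ℝ ∞ ψ D) (hc₁ : 0 < c₁)
    (hψρ : ∀ x ∈ D, c₁ * bdist d D x ≤ ψ x ∧ ψ x ≤ c₂ * bdist d D x)
    (hC : ∀ k < m, ∀ x ∈ D, bdist d D x ^ k * ‖iteratedFDerivWithin ℝ (k + 1) ψ D x‖ ≤ C k)
    (μ : ℝ) (hf : ContDiffOn ℝ m f D) :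
    Knorm d D p (θ + μ * p) (Θ + μ * p) m f ≤
      ENNReal.ofReal (rpowMulKnormConst p m c₁ c₂ C (-μ)) *
        Knorm d D p θ Θ m (fun x => ψ x ^ μ * f x) := by
  have hψ0 : ∀ x ∈ D, 0 < ψ x := fun x hx => (mul_pos hc₁ (hρ x hx)).trans_le (hψρ x hx).1
  have hg : ContDiffOn ℝ m (fun x => ψ x ^ μ * f x) D :=
    ((hψ.rpow_const_of_ne fun x hx => (hψ0 x hx).ne').of_le (by exact_mod_cast le_top)).mul hf
  have h := Knorm_rpow_mul_le (θ := θ + μ * p) (Θ := Θ + μ * p) hp hD hρ hψ hc₁ hψρ hC (-μ) hg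
  rwa [Knorm_congr hD.measurableSet (g := f) fun x hx => by
      simp only [← mul_assoc, ← Real.rpow_add (hψ0 x hx), neg_add_cancel, Real.rpow_zero, one_mul],
    show θ + μ * p + -μ * p = θ by ring, show Θ + μ * p + -μ * p = Θ by ring] at h

end Knorm

section ConicDomain

variable {d : ℕ} {M : Set (EuclideanSpace ℝ (Fin d))}

lemma isOpen_conicDomain {U : Set (EuclideanSpace ℝ (Fin d))} (hU : IsOpen U)
    (hM : M = U ∩ sphere 0 1) : IsOpen (conicDomain d M) := by
  have hnormalize : ContinuousOn (fun x : EuclideanSpace ℝ (Fin d) => ‖x‖⁻¹ • x) {0}ᶜ :=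
    (continuousOn_id.norm.inv₀ fun x hx => norm_ne_zero_iff.mpr hx).smul continuousOn_id
  convert hnormalize.isOpen_inter_preimage isOpen_compl_singleton hU using 1
  ext x
  simp only [conicDomain, hM, mem_ofPred_eq, mem_inter_iff, mem_compl_iff, mem_singleton_iff,
    Set.mem_preimage, mem_sphere_zero_iff_norm]
  exact and_congr_right fun hx => and_iff_left (norm_smul_inv_norm hx)

lemma zero_mem_frontier_conicDomain (hM : M.Nonempty) (hMs : M ⊆ sphere 0 1) :
    (0 : EuclideanSpace ℝ (Fin d)) ∈ frontier (conicDomain d M) := by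
  obtain ⟨y, hy⟩ := hM
  have hy1 : ‖y‖ = 1 := mem_sphere_zero_iff_norm.mp (hMs hy)
  refine ⟨?_, fun h => (interior_subset h).1 rfl⟩
  have hray : ∀ t : ℝ, 0 < t → t • y ∈ conicDomain d M := fun t ht => by
    refine ⟨smul_ne_zero ht.ne' (norm_ne_zero_iff.mp (hy1.symm ▸ one_ne_zero)), ?_⟩
    rwa [norm_smul, hy1, mul_one, Real.norm_of_nonneg ht.le, smul_smul, inv_mul_cancel₀ ht.ne',
      one_smul]
  refine mem_closure_of_tendsto (f := fun t : ℝ => t • y) (b := 𝓝[>] 0) ?_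
    (eventually_nhdsWithin_of_forall hray)
  exact tendsto_nhdsWithin_of_tendsto_nhds
    ((continuous_id.smul continuous_const).tendsto' (0 : ℝ) 0 (zero_smul ℝ y))

end ConicDomain

lemma bdist_pos {d : ℕ} {D : Set (EuclideanSpace ℝ (Fin d))} (hD : IsOpen D)
    (hfr : (frontier D).Nonempty) {x : EuclideanSpace ℝ (Fin d)} (hx : x ∈ D) :
    0 < bdist d D x :=
  (isClosed_frontier.notMem_iff_infDist_pos hfr).mp fun h => h.2 (hD.interior_eq.symm ▸ hx)

theorem stmt_6_general (d : ℕ) (p θ Θ μ : ℝ) (hp : 1 < p) (m : ℕ)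
    (c₁ c₂ : ℝ) (hc₁ : 0 < c₁) (C : ℕ → ℝ) :
    ∃ N : ℝ, 1 ≤ N ∧
      ∀ M : Set (EuclideanSpace ℝ (Fin d)), M.Nonempty →
        M ⊆ Metric.sphere (0 : EuclideanSpace ℝ (Fin d)) 1 →
        (∃ U : Set (EuclideanSpace ℝ (Fin d)),
          IsOpen U ∧ M = U ∩ Metric.sphere (0 : EuclideanSpace ℝ (Fin d)) 1) →
        ¬ Metric.sphere (0 : EuclideanSpace ℝ (Fin d)) 1 ⊆ closure M →
        ∀ ψ : EuclideanSpace ℝ (Fin d) → ℝ,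
          ContDiffOn ℝ (⊤ : ℕ∞) ψ (conicDomain d M) →
          (∀ x ∈ conicDomain d M,
            c₁ * bdist d (conicDomain d M) x ≤ ψ x ∧
              ψ x ≤ c₂ * bdist d (conicDomain d M) x) →
          (∀ k < m, ∀ x ∈ conicDomain d M,
            bdist d (conicDomain d M) x ^ k *
              ‖iteratedFDerivWithin ℝ (k + 1) ψ (conicDomain d M) x‖ ≤ C k) →
          ∀ f : EuclideanSpace ℝ (Fin d) → ℝ,
            ContDiffOn ℝ (m : ℕ∞) f (conicDomain d M) →
            (ENNReal.ofReal N)⁻¹ *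
                Knorm d (conicDomain d M) p (θ + μ * p) (Θ + μ * p) m f ≤
              Knorm d (conicDomain d M) p θ Θ m (fun x => ψ x ^ μ * f x) ∧
            Knorm d (conicDomain d M) p θ Θ m (fun x => ψ x ^ μ * f x) ≤
              ENNReal.ofReal N *
                Knorm d (conicDomain d M) p (θ + μ * p) (Θ + μ * p) m f := by
  set N := max 1 (max (rpowMulKnormConst p m c₁ c₂ C μ) (rpowMulKnormConst p m c₁ c₂ C (-μ)))
  refine ⟨N, le_max_left _ _, fun M hM hMs ⟨U, hU, hMU⟩ _ ψ hψ hψρ hC f hf => ?_⟩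
  have hD := isOpen_conicDomain hU hMU
  have hρ : ∀ x ∈ conicDomain d M, 0 < bdist d (conicDomain d M) x := fun x hx =>
    bdist_pos hD ⟨0, zero_mem_frontier_conicDomain hM hMs⟩ hx
  have hN : ENNReal.ofReal N ≠ 0 :=
    (ENNReal.ofReal_pos.mpr (one_pos.trans_le (le_max_left _ _))).ne'
  constructor
  · rw [ENNReal.inv_mul_le_iff hN ENNReal.ofReal_ne_top]
    refine (Knorm_le_Knorm_rpow_mul hp hD hρ hψ hc₁ hψρ hC μ hf).trans ?_
    gcongr
    exact (le_max_right _ _).trans (le_max_right _ _)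
  · refine (Knorm_rpow_mul_le hp hD hρ hψ hc₁ hψρ hC μ hf).trans ?_
    gcongr
    exact (le_max_left _ _).trans (le_max_right _ _)

/-- Let `d ≥ 2`, `p ∈ (1,∞)`, `θ, Θ, μ ∈ ℝ`, `m ∈ ℕ`, `0 < c₁ ≤ c₂` and
`C₀, …, C_{m−1}` be given. Then there is `N ≥ 1`, depending only on
`d, p, m, θ, Θ, μ, c₁, c₂, C₀, …, C_{m−1}`, such that for any conic domain `D = D(M)`,
any infinitely differentiable `ψ : D → ℝ` with `c₁ ρ ≤ ψ ≤ c₂ ρ` on `D` and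
`ρ^k ‖D^(k+1) ψ‖ ≤ C_k` on `D` for `k < m`, and any `f ∈ C^m(D)`,
`N⁻¹ ‖f‖_{K^m_{p,θ+μp,Θ+μp}(D)} ≤ ‖ψ^μ f‖_{K^m_{p,θ,Θ}(D)} ≤ N ‖f‖_{K^m_{p,θ+μp,Θ+μp}(D)}`. -/
theorem stmt_6 (d : ℕ) (hd : 2 ≤ d) (p θ Θ μ : ℝ) (hp : 1 < p) (m : ℕ)
    (c₁ c₂ : ℝ) (hc₁ : 0 < c₁) (hc₁₂ : c₁ ≤ c₂) (C : ℕ → ℝ) :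
    ∃ N : ℝ, 1 ≤ N ∧
      ∀ M : Set (EuclideanSpace ℝ (Fin d)), M.Nonempty →
        M ⊆ Metric.sphere (0 : EuclideanSpace ℝ (Fin d)) 1 →
        (∃ U : Set (EuclideanSpace ℝ (Fin d)),
          IsOpen U ∧ M = U ∩ Metric.sphere (0 : EuclideanSpace ℝ (Fin d)) 1) →
        ¬ Metric.sphere (0 : EuclideanSpace ℝ (Fin d)) 1 ⊆ closure M →
        ∀ ψ : EuclideanSpace ℝ (Fin d) → ℝ,
          ContDiffOn ℝ (⊤ : ℕ∞) ψ (conicDomain d M) →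
          (∀ x ∈ conicDomain d M,
            c₁ * bdist d (conicDomain d M) x ≤ ψ x ∧
              ψ x ≤ c₂ * bdist d (conicDomain d M) x) →
          (∀ k < m, ∀ x ∈ conicDomain d M,
            bdist d (conicDomain d M) x ^ k *
              ‖iteratedFDerivWithin ℝ (k + 1) ψ (conicDomain d M) x‖ ≤ C k) →
          ∀ f : EuclideanSpace ℝ (Fin d) → ℝ,
            ContDiffOn ℝ (m : ℕ∞) f (conicDomain d M) →
            (ENNReal.ofReal N)⁻¹ *
                Knorm d (conicDomain d M) p (θ + μ * p) (Θ + μ * p) m f ≤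
              Knorm d (conicDomain d M) p θ Θ m (fun x => ψ x ^ μ * f x) ∧
            Knorm d (conicDomain d M) p θ Θ m (fun x => ψ x ^ μ * f x) ≤
              ENNReal.ofReal N *
                Knorm d (conicDomain d M) p (θ + μ * p) (Θ + μ * p) m f :=
  stmt_6_general d p θ Θ μ hp m c₁ c₂ hc₁ C
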